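/- arXiv:0810.1100 — 5 statements merged into one kernel-verified Lean document; each statement's English description precedes it below -/
import Mathlib

section
/- Let X(x) = a x^4 + 4b x^3 + 6c x^2 + 4d x + e be a quartic and define g2 = a e - 4 b d + 3 c^2 and g3 = a c e + 2 b c d - a d^2 - e b^2 - c^3. Then for s defined implicitly via the Euler integral, the discriminant-type identity holds: if s = (1/4)((√X(x) - √X(y))/(x-y))^2 - a(x+y)^2/4 - b(x+y) - c (with X(x), X(y) ≥ 0 and x ≠ y), then 4s^3 - g2 s - g3 = ((Y1 x + Y2)√X(x) - (X1 y + X2)√X(y))^2/(x-y)^6, where X1 = a x^3 + 3b x^2 + 3c x + d, X2 = b x^3 + 3c x^2 + 3d x + e, and Y1, Y2 are the same polynomials evaluated at y. -/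
/-!
Put `P = √X(x)`, `Q = √X(y)` and let `F(x, y)` be Euler's symmetric biquadratic with
`F(x, x) = X(x)`. Since `X(x) + X(y) - (x - y)² (a (x + y)² + 4b (x + y) + 4c) = 2 F(x, y)`,
one gets `s = (F(x, y) - P Q) / (2 (x - y)²)`. Both sides of the identity are then polynomials
in `P Q` once `P² = X(x)` and `Q² = X(y)` are used, and their constant and `P Q` coefficients
agree by two polynomial identities.
-/

section Quartic

variable {R : Type*} [CommRing R] (a b c d e : R)

def quartic (t : R) : R := a * t ^ 4 + 4 * b * t ^ 3 + 6 * c * t ^ 2 + 4 * d * t + e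

def quarticPolar (x y : R) : R :=
  (a * y ^ 3 + 3 * b * y ^ 2 + 3 * c * y + d) * x + (b * y ^ 3 + 3 * c * y ^ 2 + 3 * d * y + e)

def quarticBiquadratic (x y : R) : R :=
  a * x ^ 2 * y ^ 2 + 2 * b * x * y * (x + y) + c * (x ^ 2 + 4 * x * y + y ^ 2)
    + 2 * d * (x + y) + e

def quarticG2 : R := a * e - 4 * b * d + 3 * c ^ 2

def quarticG3 : R := a * c * e + 2 * b * c * d - a * d ^ 2 - e * b ^ 2 - c ^ 3

theorem quartic_add_quartic_sub_eq_two_mul_biquadratic (x y : R) :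
    quartic a b c d e x + quartic a b c d e y
        - (x - y) ^ 2 * (a * (x + y) ^ 2 + 4 * b * (x + y) + 4 * c)
      = 2 * quarticBiquadratic a b c d e x y := by
  unfold quartic quarticBiquadratic
  ring

theorem four_mul_quarticPolar_mul_quarticPolar (x y : R) :
    4 * quarticPolar a b c d e x y * quarticPolar a b c d e y x
      = 3 * quarticBiquadratic a b c d e x y ^ 2 + quartic a b c d e x * quartic a b c d e y
        - quarticG2 a b c d e * (x - y) ^ 4 := by
  unfold quarticPolar quarticBiquadratic quartic quarticG2
  ring

theorem two_mul_quarticPolar_sq_mul_quartic_add (x y : R) :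
    2 * (quarticPolar a b c d e x y ^ 2 * quartic a b c d e x
        + quarticPolar a b c d e y x ^ 2 * quartic a b c d e y)
      = quarticBiquadratic a b c d e x y ^ 3
        + 3 * quarticBiquadratic a b c d e x y * quartic a b c d e x * quartic a b c d e y
        - quarticG2 a b c d e * (x - y) ^ 4 * quarticBiquadratic a b c d e x y
        - 2 * quarticG3 a b c d e * (x - y) ^ 6 := by
  unfold quarticPolar quarticBiquadratic quartic quarticG2 quarticG3
  ring

variable {a b c d e}

theorem cubic_quarticBiquadratic_sub_mul_eq_two_mul_sq {x y P Q : R}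
    (hP : P ^ 2 = quartic a b c d e x) (hQ : Q ^ 2 = quartic a b c d e y) :
    let S := quarticBiquadratic a b c d e x y - P * Q
    S ^ 3 - quarticG2 a b c d e * (x - y) ^ 4 * S - 2 * quarticG3 a b c d e * (x - y) ^ 6
      = 2 * (quarticPolar a b c d e x y * P - quarticPolar a b c d e y x * Q) ^ 2 := by
  intro S
  -- `P²Q² - X(x)X(y) = (P² - X(x))Q² + X(x)(Q² - X(y))`
  linear_combination
    ((3 * quarticBiquadratic a b c d e x y - P * Q) * Q ^ 2
        - 2 * quarticPolar a b c d e x y ^ 2) * hP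
      + ((3 * quarticBiquadratic a b c d e x y - P * Q) * quartic a b c d e x
        - 2 * quarticPolar a b c d e y x ^ 2) * hQ
      - two_mul_quarticPolar_sq_mul_quartic_add a b c d e x y
      + P * Q * four_mul_quarticPolar_mul_quarticPolar a b c d e x y

end Quartic

theorem eq_quarticBiquadratic_sub_div {K : Type*} [Field K] {a b c d e x y P Q s : K}
    (h2 : (2 : K) ≠ 0) (hxy : x ≠ y) (hP : P ^ 2 = quartic a b c d e x)
    (hQ : Q ^ 2 = quartic a b c d e y)
    (hs : s = (1 / 4) * ((P - Q) / (x - y)) ^ 2 - a * (x + y) ^ 2 / 4 - b * (x + y) - c) :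
    s = (quarticBiquadratic a b c d e x y - P * Q) / (2 * (x - y) ^ 2) := by
  have hu : x - y ≠ 0 := sub_ne_zero.mpr hxy
  have h4 : (4 : K) ≠ 0 := by simpa [show (4 : K) = 2 * 2 by norm_num] using h2
  rw [hs]
  field_simp
  linear_combination
    2 * hP + 2 * hQ + 2 * quartic_add_quartic_sub_eq_two_mul_biquadratic a b c d e x y

/-- Euler's discriminant-type identity for the algebraic integral `s` of the quartic
`X(t) = a t⁴ + 4b t³ + 6c t² + 4d t + e`. -/
theorem stmt0 (a b c d e x y : ℝ) (hxy : x ≠ y)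
    (hX : 0 ≤ a * x ^ 4 + 4 * b * x ^ 3 + 6 * c * x ^ 2 + 4 * d * x + e)
    (hY : 0 ≤ a * y ^ 4 + 4 * b * y ^ 3 + 6 * c * y ^ 2 + 4 * d * y + e)
    (s : ℝ)
    (hs : s = (1 / 4) * ((Real.sqrt (a * x ^ 4 + 4 * b * x ^ 3 + 6 * c * x ^ 2 + 4 * d * x + e)
            - Real.sqrt (a * y ^ 4 + 4 * b * y ^ 3 + 6 * c * y ^ 2 + 4 * d * y + e)) / (x - y)) ^ 2
          - a * (x + y) ^ 2 / 4 - b * (x + y) - c) :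
    4 * s ^ 3 - (a * e - 4 * b * d + 3 * c ^ 2) * s
        - (a * c * e + 2 * b * c * d - a * d ^ 2 - e * b ^ 2 - c ^ 3)
      = (((a * y ^ 3 + 3 * b * y ^ 2 + 3 * c * y + d) * x
            + (b * y ^ 3 + 3 * c * y ^ 2 + 3 * d * y + e))
            * Real.sqrt (a * x ^ 4 + 4 * b * x ^ 3 + 6 * c * x ^ 2 + 4 * d * x + e)
         - ((a * x ^ 3 + 3 * b * x ^ 2 + 3 * c * x + d) * y
            + (b * x ^ 3 + 3 * c * x ^ 2 + 3 * d * x + e))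
            * Real.sqrt (a * y ^ 4 + 4 * b * y ^ 3 + 6 * c * y ^ 2 + 4 * d * y + e)) ^ 2
        / (x - y) ^ 6 := by
  have hu : x - y ≠ 0 := sub_ne_zero.mpr hxy
  have hP : √(quartic a b c d e x) ^ 2 = quartic a b c d e x := Real.sq_sqrt hX
  have hQ : √(quartic a b c d e y) ^ 2 = quartic a b c d e y := Real.sq_sqrt hY
  have key := cubic_quarticBiquadratic_sub_mul_eq_two_mul_sq hP hQ
  rw [eq_quarticBiquadratic_sub_div two_ne_zero hxy hP hQ hs]
  change _ = (quarticPolar a b c d e x y * √(quartic a b c d e x)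
    - quarticPolar a b c d e y x * √(quartic a b c d e y)) ^ 2 / (x - y) ^ 6
  rw [eq_div_iff (pow_ne_zero 6 hu)]
  field_simp
  unfold quarticG2 quarticG3 at key
  linear_combination 4 * key
end

section
/- On ℝ^4 with canonical coordinates (x, y, p_x, p_y), let H1 = p_x p_y + α y(x + y^2) + β(x + 3y^2) + γ y and let H2 = p_y^2/4 + p_x^2 x − y p_y p_x + α(3y^2 + x)(x − y^2)/4 + 2β y(x − y^2) + (γ/2)(x − y^2) be the second Stäckel integral; then {H1, H2} = 0. -/
lemma dpoly (a b c d e x : ℝ) :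
    deriv (fun t : ℝ => a + b*t + c*t^2 + d*t^3 + e*t^4)
      x = b + 2*c*x + 3*d*x^2 + 4*e*x^3 := by
  have h : HasDerivAt (fun t : ℝ => a + b*t + c*t^2 + d*t^3 + e*t^4)
      (b + 2*c*x + 3*d*x^2 + 4*e*x^3) x := by
    have h1 := (hasDerivAt_id x).const_mul b
    have h2 := (hasDerivAt_pow 2 x).const_mul c
    have h3 := (hasDerivAt_pow 3 x).const_mul d
    have h4 := (hasDerivAt_pow 4 x).const_mul e
    have := (((hasDerivAt_const x a).add h1).add h2).add h3 |>.add h4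
    convert this using 1
    · rfl
    · rfl
    · ext t; simp only [Pi.add_apply, id]
    · push_cast
      ring
  exact h.deriv

lemma dpoly' (f : ℝ → ℝ) (a b c d e x : ℝ)
    (hf : ∀ t, f t = a + b*t + c*t^2 + d*t^3 + e*t^4) :
    deriv f x = b + 2*c*x + 3*d*x^2 + 4*e*x^3 := by
  rw [show f = fun t : ℝ => a + b*t + c*t^2 + d*t^3 + e*t^4 from funext hf]
  exact dpoly a b c d e x

/-- Canonical Poisson bracket on ℝ⁴ with coordinates (x, y, px, py). -/
noncomputable def pb (f g : ℝ → ℝ → ℝ → ℝ → ℝ) (x y px py : ℝ) : ℝ :=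
    deriv (fun t => f t y px py) x * deriv (fun t => g x y t py) px
  + deriv (fun t => f x t px py) y * deriv (fun t => g x y px t) py
  - deriv (fun t => f x y t py) px * deriv (fun t => g t y px py) x
  - deriv (fun t => f x y px t) py * deriv (fun t => g x t px py) y

theorem stmt5 (α β γ : ℝ) :
    ∀ x y px py : ℝ,
      pb (fun x y px py => px * py + α * y * (x + y ^ 2) + β * (x + 3 * y ^ 2) + γ * y)
         (fun x y px py => py ^ 2 / 4 + px ^ 2 * x - y * py * px
            + α * (3 * y ^ 2 + x) * (x - y ^ 2) / 4 + 2 * β * y * (x - y ^ 2)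
            + (γ / 2) * (x - y ^ 2)) x y px py = 0 := by
  intro x y px py
  unfold pb
  rw [dpoly' _ (px*py + α*y*y^2 + β*(3*y^2) + γ*y) (α*y+β) 0 0 0 x (fun t => by ring)]
  rw [dpoly' _ (py^2/4 + α*(3*y^2+x)*(x-y^2)/4 + 2*β*y*(x-y^2) + (γ/2)*(x-y^2))
      (-(y*py)) x 0 0 px (fun t => by ring)]
  rw [dpoly' _ (px*py + β*x) (α*x+γ) (3*β) α 0 y (fun t => by ring)]
  rw [dpoly' _ (px^2*x + α*(3*y^2+x)*(x-y^2)/4 + 2*β*y*(x-y^2) + (γ/2)*(x-y^2))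
      (-(y*px)) (1/4) 0 0 py (fun t => by ring)]
  rw [dpoly' _ (α*y*(x+y^2) + β*(x+3*y^2) + γ*y) py 0 0 0 px (fun t => by ring)]
  rw [dpoly' _ (py^2/4 - y*py*px - (3*α/4)*y^4 - 2*β*y^3 - (γ/2)*y^2)
      (px^2 + (α/2)*y^2 + 2*β*y + γ/2) (α/4) 0 0 x (fun t => by ring)]
  rw [dpoly' _ (α*y*(x+y^2) + β*(x+3*y^2) + γ*y) px 0 0 0 py (fun t => by ring)]
  rw [dpoly' _ (py^2/4 + px^2*x + α*x^2/4 + (γ/2)*x) (-(py*px) + 2*β*x)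
      (α*x/2 - γ/2) (-(2*β)) (-(3*α/4)) y (fun t => by ring)]
  ring
end

section
/- On ℝ^4 with canonical coordinates (x, y, p_x, p_y) restricted to x ≠ y, the Hamiltonian H1 = p_x p_y + α(x+3y)(3x+y) + β(x+y) + γ/(x−y)^2 Poisson-commutes with H2 = (p_x − p_y)(p_x x − p_y y) − 2α(x+y)(x−y)^2 − β(x−y)^2/2 − 2γ(x+y)/(x−y)^2, i.e. {H1, H2} = 0. -/
theorem stmt6 (α β γ : ℝ) :
    ∀ x y px py : ℝ, x ≠ y →
      pb (fun x y px py => px * py + α * (x + 3 * y) * (3 * x + y) + β * (x + y)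
            + γ / (x - y) ^ 2)
         (fun x y px py => (px - py) * (px * x - py * y)
            - 2 * α * (x + y) * (x - y) ^ 2 - β * (x - y) ^ 2 / 2
            - 2 * γ * (x + y) / (x - y) ^ 2) x y px py = 0 := by
  intro x y px py hxy
  have hd : x - y ≠ 0 := sub_ne_zero.mpr hxy
  have hd2 : (x - y) ^ 2 ≠ 0 := pow_ne_zero _ hd
  have efx : deriv (fun t => px * py + α * (t + 3 * y) * (3 * t + y) + β * (t + y)
      + γ / (t - y) ^ 2) x
      = (0 + (α * 1 * (3 * x + y) + α * (x + 3 * y) * (3 * 1)) + β * 1)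
        + (0 * (x - y) ^ 2 - γ * (((2 : ℕ) : ℝ) * (x - y) ^ 1 * 1)) / ((x - y) ^ 2) ^ 2 :=
    ((((hasDerivAt_const x (px * py)).add
        ((((hasDerivAt_id x).add_const (3 * y)).const_mul α).mul
          (((hasDerivAt_id x).const_mul 3).add_const y))).add
      (((hasDerivAt_id x).add_const y).const_mul β)).add
      ((hasDerivAt_const x γ).div (((hasDerivAt_id x).sub_const y).pow 2) hd2)).deriv
  have efy : deriv (fun t => px * py + α * (x + 3 * t) * (3 * x + t) + β * (x + t)
      + γ / (x - t) ^ 2) y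
      = (0 + (α * (3 * 1) * (3 * x + y) + α * (x + 3 * y) * 1) + β * 1)
        + (0 * (x - y) ^ 2 - γ * (((2 : ℕ) : ℝ) * (x - y) ^ 1 * (-1))) / ((x - y) ^ 2) ^ 2 :=
    ((((hasDerivAt_const y (px * py)).add
        ((((hasDerivAt_id y).const_mul 3).const_add x).const_mul α |>.mul
          ((hasDerivAt_id y).const_add (3 * x)))).add
      (((hasDerivAt_id y).const_add x).const_mul β)).add
      ((hasDerivAt_const y γ).div (((hasDerivAt_id y).const_sub x).pow 2) hd2)).deriv
  have efpx : deriv (fun t => t * py + α * (x + 3 * y) * (3 * x + y) + β * (x + y)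
      + γ / (x - y) ^ 2) px = 1 * py :=
    ((((hasDerivAt_id px).mul_const py).add_const
        (α * (x + 3 * y) * (3 * x + y))).add_const (β * (x + y))
      |>.add_const (γ / (x - y) ^ 2)).deriv
  have efpy : deriv (fun t => px * t + α * (x + 3 * y) * (3 * x + y) + β * (x + y)
      + γ / (x - y) ^ 2) py = px * 1 :=
    ((((hasDerivAt_id py).const_mul px).add_const
        (α * (x + 3 * y) * (3 * x + y))).add_const (β * (x + y))
      |>.add_const (γ / (x - y) ^ 2)).deriv
  have egx : deriv (fun t => (px - py) * (px * t - py * y) - 2 * α * (t + y) * (t - y) ^ 2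
      - β * (t - y) ^ 2 / 2 - 2 * γ * (t + y) / (t - y) ^ 2) x
      = (px - py) * (px * 1)
        - ((2 * α * 1) * (x - y) ^ 2
            + (2 * α * (x + y)) * (((2 : ℕ) : ℝ) * (x - y) ^ 1 * 1))
        - β * (((2 : ℕ) : ℝ) * (x - y) ^ 1 * 1) / 2
        - ((2 * γ * 1) * (x - y) ^ 2
            - (2 * γ * (x + y)) * (((2 : ℕ) : ℝ) * (x - y) ^ 1 * 1)) / ((x - y) ^ 2) ^ 2 :=
    (((((((hasDerivAt_id x).const_mul px).sub_const (py * y)).const_mul (px - py)).sub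
        ((((hasDerivAt_id x).add_const y).const_mul (2 * α)).mul
          (((hasDerivAt_id x).sub_const y).pow 2))).sub
      (((((hasDerivAt_id x).sub_const y).pow 2).const_mul β).div_const 2)).sub
      ((((hasDerivAt_id x).add_const y).const_mul (2 * γ)).div
        (((hasDerivAt_id x).sub_const y).pow 2) hd2)).deriv
  have egy : deriv (fun t => (px - py) * (px * x - py * t) - 2 * α * (x + t) * (x - t) ^ 2
      - β * (x - t) ^ 2 / 2 - 2 * γ * (x + t) / (x - t) ^ 2) y
      = (px - py) * (-(py * 1))
        - ((2 * α * 1) * (x - y) ^ 2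
            + (2 * α * (x + y)) * (((2 : ℕ) : ℝ) * (x - y) ^ 1 * (-1)))
        - β * (((2 : ℕ) : ℝ) * (x - y) ^ 1 * (-1)) / 2
        - ((2 * γ * 1) * (x - y) ^ 2
            - (2 * γ * (x + y)) * (((2 : ℕ) : ℝ) * (x - y) ^ 1 * (-1))) / ((x - y) ^ 2) ^ 2 :=
    (((((((hasDerivAt_id y).const_mul py).const_sub (px * x)).const_mul (px - py)).sub
        ((((hasDerivAt_id y).const_add x).const_mul (2 * α)).mul
          (((hasDerivAt_id y).const_sub x).pow 2))).sub
      (((((hasDerivAt_id y).const_sub x).pow 2).const_mul β).div_const 2)).sub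
      ((((hasDerivAt_id y).const_add x).const_mul (2 * γ)).div
        (((hasDerivAt_id y).const_sub x).pow 2) hd2)).deriv
  have egpx : deriv (fun t => (t - py) * (t * x - py * y) - 2 * α * (x + y) * (x - y) ^ 2
      - β * (x - y) ^ 2 / 2 - 2 * γ * (x + y) / (x - y) ^ 2) px
      = 1 * (px * x - py * y) + (px - py) * (1 * x) :=
    (((((hasDerivAt_id px).sub_const py).mul
        (((hasDerivAt_id px).mul_const x).sub_const (py * y))).sub_const
        (2 * α * (x + y) * (x - y) ^ 2)).sub_const (β * (x - y) ^ 2 / 2)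
      |>.sub_const (2 * γ * (x + y) / (x - y) ^ 2)).deriv
  have egpy : deriv (fun t => (px - t) * (px * x - t * y) - 2 * α * (x + y) * (x - y) ^ 2
      - β * (x - y) ^ 2 / 2 - 2 * γ * (x + y) / (x - y) ^ 2) py
      = (-1) * (px * x - py * y) + (px - py) * (-(1 * y)) :=
    (((((hasDerivAt_id py).const_sub px).mul
        (((hasDerivAt_id py).mul_const y).const_sub (px * x))).sub_const
        (2 * α * (x + y) * (x - y) ^ 2)).sub_const (β * (x - y) ^ 2 / 2)
      |>.sub_const (2 * γ * (x + y) / (x - y) ^ 2)).deriv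
  simp only [pb]
  rw [efx, efy, efpx, efpy, egx, egy, egpx, egpy]
  push_cast
  field_simp
  ring
end

section
/- On ℝ^4 with canonical coordinates (x, y, p_x, p_y) with x > 0 and y > 1, the Hamiltonian H1 = p_x p_y + α/x^2 + β/(x^{3/2}√(y−1)) + γ/(x^{1/2}√(y−1)) Poisson-commutes with H2 = (x p_x − p_y − p_y y)(x p_x + p_y − p_y y) − 4α y/x − 2β(2y−1)/(x^{1/2}√(y−1)) − 2γ x^{1/2}/√(y−1), i.e. {H1, H2} = 0. -/
open Real

theorem pb_eq_of_hasDerivAt {f g : ℝ → ℝ → ℝ → ℝ → ℝ}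
    {x y px py fx fy fpx fpy gx gy gpx gpy : ℝ}
    (hfx : HasDerivAt (fun t => f t y px py) fx x) (hfy : HasDerivAt (fun t => f x t px py) fy y)
    (hfpx : HasDerivAt (fun t => f x y t py) fpx px)
    (hfpy : HasDerivAt (fun t => f x y px t) fpy py)
    (hgx : HasDerivAt (fun t => g t y px py) gx x) (hgy : HasDerivAt (fun t => g x t px py) gy y)
    (hgpx : HasDerivAt (fun t => g x y t py) gpx px)
    (hgpy : HasDerivAt (fun t => g x y px t) gpy py) :
    pb f g x y px py = fx * gpx + fy * gpy - fpx * gx - fpy * gy := by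
  rw [pb, hfx.deriv, hfy.deriv, hfpx.deriv, hfpy.deriv, hgx.deriv, hgy.deriv, hgpx.deriv,
    hgpy.deriv]

theorem pb_kinetic_add {V W : ℝ → ℝ → ℝ} {x y px py Vx Vy Wx Wy : ℝ}
    (hVx : HasDerivAt (fun t => V t y) Vx x) (hVy : HasDerivAt (fun t => V x t) Vy y)
    (hWx : HasDerivAt (fun t => W t y) Wx x) (hWy : HasDerivAt (fun t => W x t) Wy y) :
    pb (fun x y px py => px * py + V x y)
      (fun x y px py => (x * px - py - py * y) * (x * px + py - py * y) + W x y) x y px py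
      = px * (2 * x * (x * Vx - y * Vy) - Wy)
        - py * (2 * (x * y * Vx - (y ^ 2 - 1) * Vy) + Wx) := by
  have hgx := ((hasDerivAt_id' x |>.mul_const px |>.sub_const py |>.sub_const (py * y)).fun_mul
    (hasDerivAt_id' x |>.mul_const px |>.add_const py |>.sub_const (py * y))).fun_add hWx
  have hgy := (((hasDerivAt_const y (x * px - py)).fun_sub
    ((hasDerivAt_id' y).const_mul py)).fun_mul ((hasDerivAt_const y (x * px + py)).fun_sub
    ((hasDerivAt_id' y).const_mul py))).fun_add hWy
  have hgpx := (hasDerivAt_id' px |>.const_mul x |>.sub_const py |>.sub_const (py * y)).fun_mul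
    (hasDerivAt_id' px |>.const_mul x |>.add_const py |>.sub_const (py * y)) |>.add_const (W x y)
  have hgpy := ((((hasDerivAt_const py (x * px)).fun_sub (hasDerivAt_id' py)).fun_sub
    ((hasDerivAt_id' py).mul_const y)).fun_mul (((hasDerivAt_const py (x * px)).fun_add
    (hasDerivAt_id' py)).fun_sub ((hasDerivAt_id' py).mul_const y))).add_const (W x y)
  rw [pb_eq_of_hasDerivAt (hVx.const_add (px * py)) (hVy.const_add (px * py))
    ((hasDerivAt_id' px).mul_const py |>.add_const (V x y))
    ((hasDerivAt_id' py).const_mul px |>.add_const (V x y)) hgx hgy hgpx hgpy]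
  ring

noncomputable def eulerV (α β γ x y : ℝ) : ℝ :=
  α / x ^ 2 + β / (x ^ ((3:ℝ)/2) * √(y - 1)) + γ / (√x * √(y - 1))

noncomputable def eulerW (α β γ x y : ℝ) : ℝ :=
  -(4 * α * y / x) - 2 * β * (2 * y - 1) / (√x * √(y - 1)) - 2 * γ * √x / √(y - 1)

theorem rpow_three_halves {x : ℝ} (hx : 0 ≤ x) : x ^ ((3:ℝ)/2) = x * √x := by
  rw [sqrt_eq_rpow, ← rpow_one_add' hx (by norm_num)]
  norm_num

theorem hasDerivAt_rpow_three_halves {x : ℝ} (hx : 0 < x) :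
    HasDerivAt (fun t => t ^ ((3:ℝ)/2)) (3 / 2 * √x) x := by
  convert hasDerivAt_rpow_const (p := (3:ℝ)/2) (Or.inl hx.ne') using 2
  rw [sqrt_eq_rpow]
  norm_num

theorem hasDerivAt_sqrt_sub_one {y : ℝ} (hy : 1 < y) :
    HasDerivAt (fun t => √(t - 1)) (1 / (2 * √(y - 1))) y :=
  ((hasDerivAt_id' y).sub_const 1).sqrt (sub_ne_zero.2 hy.ne')

theorem exists_sq_param {x y : ℝ} (hx : 0 < x) (hy : 1 < y) :
    ∃ u s : ℝ, 0 < u ∧ 0 < s ∧ u ^ 2 = x ∧ s ^ 2 + 1 = y :=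
  ⟨√x, √(y - 1), sqrt_pos.2 hx, sqrt_pos.2 (sub_pos.2 hy), sq_sqrt hx.le,
    by rw [sq_sqrt (sub_pos.2 hy).le, sub_add_cancel]⟩

section Derivatives

variable {α β γ x y : ℝ}

theorem hasDerivAt_eulerV_fst (hx : 0 < x) (hy : 1 < y) :
    HasDerivAt (fun t => eulerV α β γ t y)
      (-2 * α / x ^ 3 - 3 * β / (2 * x ^ 2 * √x * √(y - 1))
        - γ / (2 * x * √x * √(y - 1))) x := by
  have hsqrt : 0 < √(y - 1) := sqrt_pos.2 (sub_pos.2 hy)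
  have h := (((hasDerivAt_const x α).fun_div (hasDerivAt_pow 2 x) (by positivity)).fun_add
    ((hasDerivAt_const x β).fun_div ((hasDerivAt_rpow_three_halves hx).mul_const √(y - 1))
      (by rw [rpow_three_halves hx.le]; positivity))).fun_add
    ((hasDerivAt_const x γ).fun_div ((hasDerivAt_sqrt hx.ne').mul_const √(y - 1))
      (by positivity))
  refine h.congr_deriv ?_
  obtain ⟨u, s, hu, -, rfl, rfl⟩ := exists_sq_param hx hy
  simp only [rpow_three_halves (sq_nonneg u), add_sub_cancel_right, sqrt_sq hu.le]
  field_simp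
  ring

theorem hasDerivAt_eulerV_snd (hx : 0 < x) (hy : 1 < y) :
    HasDerivAt (fun t => eulerV α β γ x t)
      (-β / (2 * x * √x * √(y - 1) ^ 3) - γ / (2 * √x * √(y - 1) ^ 3)) y := by
  have hsqrt : 0 < √(y - 1) := sqrt_pos.2 (sub_pos.2 hy)
  have h := ((hasDerivAt_const y (α / x ^ 2)).fun_add ((hasDerivAt_const y β).fun_div
      ((hasDerivAt_sqrt_sub_one hy).const_mul (x ^ ((3:ℝ)/2)))
      (by rw [rpow_three_halves hx.le]; positivity))).fun_add
    ((hasDerivAt_const y γ).fun_div ((hasDerivAt_sqrt_sub_one hy).const_mul √x)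
      (by positivity))
  refine h.congr_deriv ?_
  obtain ⟨u, s, hu, -, rfl, rfl⟩ := exists_sq_param hx hy
  simp only [rpow_three_halves (sq_nonneg u), add_sub_cancel_right, sqrt_sq hu.le]
  field_simp
  ring

theorem hasDerivAt_eulerW_fst (hx : 0 < x) (hy : 1 < y) :
    HasDerivAt (fun t => eulerW α β γ t y)
      (4 * α * y / x ^ 2 + β * (2 * y - 1) / (x * √x * √(y - 1))
        - γ / (√x * √(y - 1))) x := by
  have hsqrt : 0 < √(y - 1) := sqrt_pos.2 (sub_pos.2 hy)
  have h := (((hasDerivAt_const x (4 * α * y)).fun_div (hasDerivAt_id' x) hx.ne').neg.fun_sub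
    ((hasDerivAt_const x (2 * β * (2 * y - 1))).fun_div
      ((hasDerivAt_sqrt hx.ne').mul_const √(y - 1)) (by positivity))).fun_sub
    (((hasDerivAt_sqrt hx.ne').const_mul (2 * γ)).div_const √(y - 1))
  refine h.congr_deriv ?_
  obtain ⟨u, s, hu, -, rfl, rfl⟩ := exists_sq_param hx hy
  simp only [add_sub_cancel_right, sqrt_sq hu.le]
  field_simp
  ring

theorem hasDerivAt_eulerW_snd (hx : 0 < x) (hy : 1 < y) :
    HasDerivAt (fun t => eulerW α β γ x t)
      (-(4 * α / x) - 4 * β / (√x * √(y - 1)) + β * (2 * y - 1) / (√x * √(y - 1) ^ 3)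
        + γ * √x / √(y - 1) ^ 3) y := by
  have hsqrt : 0 < √(y - 1) := sqrt_pos.2 (sub_pos.2 hy)
  have h := ((((hasDerivAt_id' y).const_mul (4 * α)).div_const x).neg.fun_sub
    ((((hasDerivAt_id' y).const_mul 2).sub_const 1 |>.const_mul (2 * β)).fun_div
      ((hasDerivAt_sqrt_sub_one hy).const_mul √x) (by positivity))).fun_sub
    ((hasDerivAt_const y (2 * γ * √x)).fun_div (hasDerivAt_sqrt_sub_one hy) hsqrt.ne')
  refine h.congr_deriv ?_
  obtain ⟨u, s, hu, hs, rfl, rfl⟩ := exists_sq_param hx hy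
  simp only [add_sub_cancel_right, sqrt_sq hu.le, sqrt_sq hs.le]
  field_simp
  ring

end Derivatives

theorem stmt12 (α β γ : ℝ) :
    ∀ x y px py : ℝ, 0 < x → 1 < y →
      pb (fun x y px py => px * py + α / x ^ 2
            + β / (x ^ ((3:ℝ)/2) * Real.sqrt (y - 1))
            + γ / (x ^ ((1:ℝ)/2) * Real.sqrt (y - 1)))
         (fun x y px py => (x * px - py - py * y) * (x * px + py - py * y)
            - 4 * α * y / x - 2 * β * (2 * y - 1) / (x ^ ((1:ℝ)/2) * Real.sqrt (y - 1))
            - 2 * γ * x ^ ((1:ℝ)/2) / Real.sqrt (y - 1)) x y px py = 0 := by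
  intro x y px py hx hy
  have hH₁ : (fun x y px py => px * py + α / x ^ 2 + β / (x ^ ((3:ℝ)/2) * √(y - 1))
      + γ / (x ^ ((1:ℝ)/2) * √(y - 1))) = fun x y px py => px * py + eulerV α β γ x y := by
    simp only [eulerV, ← sqrt_eq_rpow, add_assoc]
  have hH₂ : (fun x y px py => (x * px - py - py * y) * (x * px + py - py * y) - 4 * α * y / x
      - 2 * β * (2 * y - 1) / (x ^ ((1:ℝ)/2) * √(y - 1)) - 2 * γ * x ^ ((1:ℝ)/2) / √(y - 1))
      = fun x y px py => (x * px - py - py * y) * (x * px + py - py * y) + eulerW α β γ x y := by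
    funext x y px py
    simp only [eulerW, ← sqrt_eq_rpow]
    ring
  rw [hH₁, hH₂, pb_kinetic_add (hasDerivAt_eulerV_fst hx hy) (hasDerivAt_eulerV_snd hx hy)
    (hasDerivAt_eulerW_fst hx hy) (hasDerivAt_eulerW_snd hx hy)]
  obtain ⟨u, s, hu, hs, rfl, rfl⟩ := exists_sq_param hx hy
  simp only [add_sub_cancel_right, sqrt_sq hu.le, sqrt_sq hs.le]
  field_simp
  ring
end

section
/- Euler addition differential relation in the rational-parametrization sense: let X(t) = a t^4 + 4b t^3 + 6c t^2 + 4d t + e and suppose x(τ), y(τ) are differentiable functions with X(x(τ)) > 0, X(y(τ)) > 0 satisfying x'(τ)/√(X(x(τ))) + y'(τ)/√(X(y(τ))) = 0 for all τ, with x(τ) ≠ y(τ). Then the function s(τ) = (1/4)((√(X(x)) − √(X(y)))/(x − y))^2 − (a/4)(x+y)^2 − b(x+y) − c is constant in τ. -/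
/-!
Along a solution write `x' = k √X(x)` and `y' = -k √X(y)`. Then `(√X(x))' = k X'(x)/2`,
`(√X(y))' = -k X'(y)/2` and `(x + y)' = k (√X(x) - √X(y))`, and since
`(√X(x) - √X(y)) (√X(x) + √X(y)) = X(x) - X(y)`, the derivative of
`w = (√X(x) - √X(y)) / (x - y)` is `k (x - y) (a (x + y) + 2 b)` by the secant identity
`(X'(u) + X'(v)) (u - v) / 2 - (X(u) - X(v)) = (u - v)³ (a (u + v) + 2 b)` of a quartic.
Hence `s' = w w' / 2 - (a (x + y) / 2 + b) (x + y)' = 0`.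
-/

open Real

def eulerQuartic (a b c d e t : ℝ) : ℝ := a * t ^ 4 + 4 * b * t ^ 3 + 6 * c * t ^ 2 + 4 * d * t + e

def eulerQuarticDeriv (a b c d t : ℝ) : ℝ := 4 * (a * t ^ 3 + 3 * b * t ^ 2 + 3 * c * t + d)

noncomputable def eulerIntegral (a b c d e u v : ℝ) : ℝ :=
  1 / 4 * ((√(eulerQuartic a b c d e u) - √(eulerQuartic a b c d e v)) / (u - v)) ^ 2
    - a / 4 * (u + v) ^ 2 - b * (u + v) - c

theorem exists_eq_mul_and_eq_neg_mul_of_div_add_div_eq_zero {x' y' p q : ℝ} (hp : p ≠ 0)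
    (hq : q ≠ 0) (h : x' / p + y' / q = 0) : ∃ k, x' = k * p ∧ y' = -(k * q) :=
  ⟨x' / p, by field_simp, by field_simp at h ⊢; linarith⟩

theorem eulerQuartic_secant (a b c d e u v : ℝ) :
    (eulerQuarticDeriv a b c d u + eulerQuarticDeriv a b c d v) / 2 * (u - v)
      - (eulerQuartic a b c d e u - eulerQuartic a b c d e v)
      = (u - v) ^ 3 * (a * (u + v) + 2 * b) := by
  simp only [eulerQuartic, eulerQuarticDeriv]; ring

section

variable {a b c d e : ℝ}

theorem hasDerivAt_eulerQuartic (t : ℝ) :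
    HasDerivAt (eulerQuartic a b c d e) (eulerQuarticDeriv a b c d t) t := by
  have h := (((((hasDerivAt_pow 4 t).const_mul a).add ((hasDerivAt_pow 3 t).const_mul (4 * b))).add
    ((hasDerivAt_pow 2 t).const_mul (6 * c))).add ((hasDerivAt_id t).const_mul (4 * d))).add_const e
  exact h.congr_deriv (by simp only [eulerQuarticDeriv, Nat.cast_ofNat, Nat.add_one_sub_one]; ring)

theorem hasDerivAt_sqrt_eulerQuartic_comp {x : ℝ → ℝ} {k τ : ℝ}
    (hx : HasDerivAt x (k * √(eulerQuartic a b c d e (x τ))) τ)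
    (hpos : 0 < eulerQuartic a b c d e (x τ)) :
    HasDerivAt (fun t => √(eulerQuartic a b c d e (x t)))
      (k * eulerQuarticDeriv a b c d (x τ) / 2) τ := by
  refine (((hasDerivAt_eulerQuartic (x τ)).comp τ hx).sqrt hpos.ne').congr_deriv ?_
  have : √(eulerQuartic a b c d e (x τ)) ≠ 0 := (sqrt_pos.2 hpos).ne'
  simp only [Function.comp_apply]
  field_simp

theorem hasDerivAt_eulerIntegral_comp_eq_zero {x y : ℝ → ℝ} {k τ : ℝ}
    (hx : HasDerivAt x (k * √(eulerQuartic a b c d e (x τ))) τ)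
    (hy : HasDerivAt y (-(k * √(eulerQuartic a b c d e (y τ)))) τ)
    (hXx : 0 < eulerQuartic a b c d e (x τ)) (hXy : 0 < eulerQuartic a b c d e (y τ))
    (hne : x τ ≠ y τ) :
    HasDerivAt (fun t => eulerIntegral a b c d e (x t) (y t)) 0 τ := by
  have hp := hasDerivAt_sqrt_eulerQuartic_comp hx hXx
  have hq := hasDerivAt_sqrt_eulerQuartic_comp (k := -k) (by simpa using hy) hXy
  have hxy : x τ - y τ ≠ 0 := sub_ne_zero.2 hne
  have hw : HasDerivAt (fun t => (√(eulerQuartic a b c d e (x t)) - √(eulerQuartic a b c d e (y t)))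
      / (x t - y t)) (k * (x τ - y τ) * (a * (x τ + y τ) + 2 * b)) τ := by
    refine ((hp.sub hq).div (hx.sub hy) hxy).congr_deriv ?_
    simp only [Pi.sub_apply]
    field_simp
    linear_combination (2 * k) * eulerQuartic_secant a b c d e (x τ) (y τ)
      - 2 * k * sq_sqrt hXx.le + 2 * k * sq_sqrt hXy.le
  have hσ : HasDerivAt (fun t => x t + y t)
      (k * (√(eulerQuartic a b c d e (x τ)) - √(eulerQuartic a b c d e (y τ)))) τ :=
    (hx.add hy).congr_deriv (by ring)
  refine ((((hw.pow 2).const_mul (1 / 4)).sub ((hσ.pow 2).const_mul (a / 4))).sub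
    (hσ.const_mul b) |>.sub_const c).congr_deriv ?_
  simp only [Nat.cast_ofNat, Nat.add_one_sub_one, pow_one]
  field_simp
  ring

end

/-- Euler's algebraic integral `s` is a first integral of the differential relation
`x'/√X(x) + y'/√X(y) = 0`. -/
theorem stmt18 (a b c d e : ℝ) (x y : ℝ → ℝ)
    (hx : Differentiable ℝ x) (hy : Differentiable ℝ y)
    (hXx : ∀ τ, 0 < a * x τ ^ 4 + 4 * b * x τ ^ 3 + 6 * c * x τ ^ 2 + 4 * d * x τ + e)
    (hXy : ∀ τ, 0 < a * y τ ^ 4 + 4 * b * y τ ^ 3 + 6 * c * y τ ^ 2 + 4 * d * y τ + e)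
    (hne : ∀ τ, x τ ≠ y τ)
    (hode : ∀ τ,
      deriv x τ / Real.sqrt (a * x τ ^ 4 + 4 * b * x τ ^ 3 + 6 * c * x τ ^ 2 + 4 * d * x τ + e)
      + deriv y τ / Real.sqrt (a * y τ ^ 4 + 4 * b * y τ ^ 3 + 6 * c * y τ ^ 2 + 4 * d * y τ + e)
        = 0) :
    ∀ τ1 τ2 : ℝ,
      (fun τ => (1 / 4) *
          ((Real.sqrt (a * x τ ^ 4 + 4 * b * x τ ^ 3 + 6 * c * x τ ^ 2 + 4 * d * x τ + e)
            - Real.sqrt (a * y τ ^ 4 + 4 * b * y τ ^ 3 + 6 * c * y τ ^ 2 + 4 * d * y τ + e))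
            / (x τ - y τ)) ^ 2
          - (a / 4) * (x τ + y τ) ^ 2 - b * (x τ + y τ) - c) τ1
      = (fun τ => (1 / 4) *
          ((Real.sqrt (a * x τ ^ 4 + 4 * b * x τ ^ 3 + 6 * c * x τ ^ 2 + 4 * d * x τ + e)
            - Real.sqrt (a * y τ ^ 4 + 4 * b * y τ ^ 3 + 6 * c * y τ ^ 2 + 4 * d * y τ + e))
            / (x τ - y τ)) ^ 2
          - (a / 4) * (x τ + y τ) ^ 2 - b * (x τ + y τ) - c) τ2 := by
  have hderiv (τ : ℝ) : HasDerivAt (fun t => eulerIntegral a b c d e (x t) (y t)) 0 τ := by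
    obtain ⟨k, hx', hy'⟩ := exists_eq_mul_and_eq_neg_mul_of_div_add_div_eq_zero
      (sqrt_pos.2 (hXx τ)).ne' (sqrt_pos.2 (hXy τ)).ne' (hode τ)
    exact hasDerivAt_eulerIntegral_comp_eq_zero (hx' ▸ (hx τ).hasDerivAt)
      (hy' ▸ (hy τ).hasDerivAt) (hXx τ) (hXy τ) (hne τ)
  exact is_const_of_deriv_eq_zero (fun τ => (hderiv τ).differentiableAt) (fun τ => (hderiv τ).deriv)
end
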